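/- arXiv:1008.3284 — 7 statements merged into one kernel-verified Lean document; each statement's English description precedes it below -/
import Mathlib

section
/- Let s be a unimodular function on 𝕋 (|s| = 1 a.e.) such that the equation conj(s)·h_+ = h_- with h_+ ∈ H², h_- ∈ H²_- has only the trivial solution h_+ = h_- = 0. Let N be a nonzero integer. Then s·t^N does not simultaneously satisfy both: (i) conj(s t^N)·h_+ = h_- has only the trivial solution, and (ii) conj(s t^N)·h_+ = t·h_- has a nontrivial solution. Concretely: if s additionally satisfies that conj(s)·h_+ = t·h_- has a nontrivial solution (i.e., s is canonical), then for N > 0, the equation conj(s t^N) h_+ = h_- has a nontrivial solution (h_+, h_-) ∈ H² × H²_-. -/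
open MeasureTheory AddCircle Complex ComplexConjugate

instance : Fact (0 < 2 * Real.pi) := ⟨by positivity⟩

/-- The Hardy space condition: `f ∈ L²(𝕋)` with vanishing negative Fourier coefficients. -/
def MemHplus (f : AddCircle (2 * Real.pi) → ℂ) : Prop :=
  MemLp f 2 haarAddCircle ∧ ∀ n : ℤ, n < 0 → fourierCoeff f n = 0

/-- `f ∈ H²_- = L²(𝕋) ⊖ H²`: vanishing nonnegative Fourier coefficients. -/
def MemHminus (f : AddCircle (2 * Real.pi) → ℂ) : Prop :=
  MemLp f 2 haarAddCircle ∧ ∀ n : ℤ, 0 ≤ n → fourierCoeff f n = 0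

/-- A unimodular `s` is canonical if `conj s · h₊ = h₋` has only the trivial solution while
`conj s · h₊ = t · h₋` has a nontrivial solution, `h± ∈ H²_±`. -/
def IsCanonical (s : AddCircle (2 * Real.pi) → ℂ) : Prop :=
  (∀ hp hm : AddCircle (2 * Real.pi) → ℂ, MemHplus hp → MemHminus hm →
      (∀ᵐ x ∂haarAddCircle, conj (s x) * hp x = hm x) →
      hp =ᵐ[haarAddCircle] 0) ∧
  (∃ hp hm : AddCircle (2 * Real.pi) → ℂ, MemHplus hp ∧ MemHminus hm ∧
      (∀ᵐ x ∂haarAddCircle, conj (s x) * hp x = fourier 1 x * hm x) ∧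
      ¬ hp =ᵐ[haarAddCircle] 0)

/-!
The equation `conj s · h₊ = t^j · h₋` is solvable nontrivially for all `j` above some
threshold: a solution for `j` is one for every `k ≥ j`, since `t^(j - k) h₋ ∈ H²_-`.
Replacing `s` by `s t^N` shifts the threshold by `N`, and `s` is canonical exactly when the
threshold is `1`, which no longer holds after a nonzero shift.
-/

local notation "𝕋" => AddCircle (2 * Real.pi)

lemma fourierCoeff_fourier_mul (k : ℤ) (f : 𝕋 → ℂ) (n : ℤ) :
    fourierCoeff (fun x => fourier k x * f x) n = fourierCoeff f (n - k) := by
  simp only [fourierCoeff, smul_eq_mul]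
  congr 1
  ext x
  rw [← mul_assoc, ← fourier_add, neg_sub, sub_eq_neg_add]

lemma MemHminus.fourier_mul {f : 𝕋 → ℂ} (hf : MemHminus f) {k : ℤ} (hk : k ≤ 0) :
    MemHminus (fun x => fourier k x * f x) := by
  refine ⟨MemLp.of_le hf.1 ((fourier k).continuous.aestronglyMeasurable.mul
    hf.1.aestronglyMeasurable) (.of_forall fun x => by simp [Circle.norm_coe]), fun n hn => ?_⟩
  rw [fourierCoeff_fourier_mul]
  exact hf.2 _ (by omega)

def HasNontrivialSolution (s : 𝕋 → ℂ) (j : ℤ) : Prop :=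
  ∃ hp hm : 𝕋 → ℂ, MemHplus hp ∧ MemHminus hm ∧
    (∀ᵐ x ∂haarAddCircle, conj (s x) * hp x = fourier j x * hm x) ∧
    ¬ hp =ᵐ[haarAddCircle] 0

namespace HasNontrivialSolution

lemma mono {s : 𝕋 → ℂ} {j k : ℤ} (h : HasNontrivialSolution s j) (hjk : j ≤ k) :
    HasNontrivialSolution s k := by
  obtain ⟨hp, hm, hhp, hhm, heq, hne⟩ := h
  refine ⟨hp, fun x => fourier (j - k) x * hm x, hhp, hhm.fourier_mul (by omega), ?_, hne⟩
  filter_upwards [heq] with x hx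
  rw [hx, ← mul_assoc, ← fourier_add, add_sub_cancel]

lemma zero_iff {s : 𝕋 → ℂ} :
    HasNontrivialSolution s 0 ↔ ∃ hp hm : 𝕋 → ℂ, MemHplus hp ∧ MemHminus hm ∧
      (∀ᵐ x ∂haarAddCircle, conj (s x) * hp x = hm x) ∧ ¬ hp =ᵐ[haarAddCircle] 0 := by
  simp only [HasNontrivialSolution, fourier_zero, one_mul]

lemma mul_fourier_iff {s : 𝕋 → ℂ} {N j : ℤ} :
    HasNontrivialSolution (fun x => s x * fourier N x) j ↔ HasNontrivialSolution s (j + N) := by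
  have key : ∀ x (p m : ℂ), conj (s x * fourier N x) * p = fourier j x * m ↔
      conj (s x) * p = fourier (j + N) x * m := fun x p m => by
    have hj : (fourier j x : ℂ) = fourier (j + N) x * fourier (-N) x := by
      rw [← fourier_add, add_neg_cancel_right]
    rw [map_mul, ← fourier_neg, hj, mul_right_comm, mul_right_comm _ _ m]
    exact mul_left_inj' (Circle.coe_ne_zero _)
  simp only [HasNontrivialSolution, key]

end HasNontrivialSolution

lemma isCanonical_iff {s : 𝕋 → ℂ} :
    IsCanonical s ↔ ¬ HasNontrivialSolution s 0 ∧ HasNontrivialSolution s 1 := by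
  rw [HasNontrivialSolution.zero_iff]
  unfold IsCanonical HasNontrivialSolution
  push Not
  rfl

theorem stmt4_general (s : AddCircle (2 * Real.pi) → ℂ)
    (hcan : IsCanonical s) :
    (∀ N : ℤ, N ≠ 0 → ¬ IsCanonical (fun x => s x * fourier N x)) ∧
    (∀ N : ℤ, 0 < N → ∃ hp hm : AddCircle (2 * Real.pi) → ℂ,
      MemHplus hp ∧ MemHminus hm ∧
      (∀ᵐ x ∂haarAddCircle, conj (s x * fourier N x) * hp x = hm x) ∧
      ¬ hp =ᵐ[haarAddCircle] 0) := by
  obtain ⟨hs0, hs1⟩ := isCanonical_iff.mp hcan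
  have shifted (N : ℤ) (hN : 0 < N) :
      HasNontrivialSolution (fun x => s x * fourier N x) 0 :=
    HasNontrivialSolution.mul_fourier_iff.mpr (hs1.mono (by omega))
  refine ⟨fun N hN hcanN => ?_, fun N hN => HasNontrivialSolution.zero_iff.mp (shifted N hN)⟩
  obtain ⟨hN0, hN1⟩ := isCanonical_iff.mp hcanN
  rcases hN.lt_or_gt with hneg | hpos
  · exact hs0 ((HasNontrivialSolution.mul_fourier_iff.mp hN1).mono (by omega))
  · exact hN0 (shifted N hpos)

theorem stmt4 (s : AddCircle (2 * Real.pi) → ℂ)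
    (hs : ∀ᵐ x ∂haarAddCircle, ‖s x‖ = 1)
    (hcan : IsCanonical s) :
    (∀ N : ℤ, N ≠ 0 → ¬ IsCanonical (fun x => s x * fourier N x)) ∧
    (∀ N : ℤ, 0 < N → ∃ hp hm : AddCircle (2 * Real.pi) → ℂ,
      MemHplus hp ∧ MemHminus hm ∧
      (∀ᵐ x ∂haarAddCircle, conj (s x * fourier N x) * hp x = hm x) ∧
      ¬ hp =ᵐ[haarAddCircle] 0) :=
  stmt4_general s hcan
end

section
/- Let s be a canonical unimodular function on 𝕋, i.e., the only pair (h_+, h_-) ∈ H² × H²_- with conj(s)h_+ = h_- is (0,0). Suppose D, D' ∈ H² are outer functions with D(0) > 0, D'(0) > 0, ∫|D|² dm = ∫|D'|² dm = 1, and there exist unimodular constants α, α' ∈ 𝕋 with s = -conj(α)·D/conj(D) = -conj(α')·D'/conj(D') a.e. on 𝕋. Then D = D' and α = α'. -/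
open MeasureTheory AddCircle Complex ComplexConjugate

/-- An outer function in `H²`, characterized among Hardy-class functions by the equality
`log |D(0)| = ∫ log |D| dm`, with `D(0)` the zeroth Fourier coefficient. -/
def IsOuterH2 (D : AddCircle (2 * Real.pi) → ℂ) : Prop :=
  MemHplus D ∧
    Real.log (‖fourierCoeff D 0‖) =
      ∫ x, Real.log (‖D x‖) ∂haarAddCircle

/-!
Write `c = D(0)` and `c' = D'(0)`. Because `c, c'` are real and `c' c - c c' = 0`, the pair
`h₋ = conj (c' D - c D') ∈ H²_-`, `h₊ = -conj α c' D + conj α' c D' ∈ H²` satisfies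
`conj s h₊ = h₋`, so canonicity of `s` forces `c' D = c D'`. Taking `L²` norms gives `c' = c`,
hence `D = D'`, and then `α = α'` by comparing the two expressions for `s` where `D ≠ 0`.
-/

theorem fourierCoeff_conj {T : ℝ} [Fact (0 < T)] (f : AddCircle T → ℂ) (n : ℤ) :
    fourierCoeff (fun x => conj (f x)) n = conj (fourierCoeff f (-n)) := by
  unfold fourierCoeff
  rw [← integral_conj]
  congr 1
  ext x
  simp [smul_eq_mul, map_mul]

namespace MemHplus

variable {f g : AddCircle (2 * Real.pi) → ℂ}

theorem add (hf : MemHplus f) (hg : MemHplus g) : MemHplus (f + g) := by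
  refine ⟨hf.1.add hg.1, fun n hn => ?_⟩
  rw [fourierCoeff.add (hf.1.integrable one_le_two) (hg.1.integrable one_le_two), Pi.add_apply,
    hf.2 n hn, hg.2 n hn, add_zero]

theorem const_mul (hf : MemHplus f) (c : ℂ) : MemHplus (fun x => c * f x) :=
  ⟨hf.1.const_mul c, fun n hn => by rw [fourierCoeff.const_mul, hf.2 n hn, mul_zero]⟩

theorem memHminus_conj (hf : MemHplus f) (h0 : fourierCoeff f 0 = 0) :
    MemHminus (fun x => conj (f x)) := by
  refine ⟨hf.1.star, fun n hn => ?_⟩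
  rw [fourierCoeff_conj]
  rcases hn.eq_or_lt with rfl | hpos
  · rw [neg_zero, h0, map_zero]
  · rw [hf.2 (-n) (by omega), map_zero]

end MemHplus

theorem conj_mul_neg_conj_mul_of_eq_phase {α z s : ℂ} (hα : ‖α‖ = 1) (hz : z ≠ 0)
    (hs : s = -conj α * (z / conj z)) : conj s * (-conj α * z) = conj z := by
  have hαα : α * conj α = 1 := by
    rw [mul_conj, normSq_eq_norm_sq, hα, one_pow, ofReal_one]
  rw [hs, map_mul, map_neg, conj_conj, map_div₀, conj_conj]
  calc -α * (conj z / z) * (-conj α * z) = α * conj α * conj z * (z * z⁻¹) := by ring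
    _ = conj z := by rw [mul_inv_cancel₀ hz, hαα, one_mul, mul_one]

theorem ae_ne_zero_of_norm_eq_one {X : Type*} [MeasurableSpace X] {μ : Measure X}
    {s D : X → ℂ} {u : ℂ} (hs : ∀ᵐ x ∂μ, ‖s x‖ = 1)
    (hsD : ∀ᵐ x ∂μ, s x = u * (D x / conj (D x))) : ∀ᵐ x ∂μ, D x ≠ 0 := by
  filter_upwards [hs, hsD] with x hsx hsDx hDx
  rw [hsDx, hDx] at hsx
  simp at hsx

theorem ae_add_eq_zero_of_canonical {s D D' : AddCircle (2 * Real.pi) → ℂ} {α α' β β' : ℂ}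
    (hα : ‖α‖ = 1) (hα' : ‖α'‖ = 1)
    (hcan : ∀ hp hm : AddCircle (2 * Real.pi) → ℂ, MemHplus hp → MemHminus hm →
      (∀ᵐ x ∂haarAddCircle, conj (s x) * hp x = hm x) →
      hp =ᵐ[haarAddCircle] 0 ∧ hm =ᵐ[haarAddCircle] 0)
    (hD : MemHplus D) (hD' : MemHplus D')
    (hDne : ∀ᵐ x ∂haarAddCircle, D x ≠ 0) (hD'ne : ∀ᵐ x ∂haarAddCircle, D' x ≠ 0)
    (hsD : ∀ᵐ x ∂haarAddCircle, s x = -conj α * (D x / conj (D x)))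
    (hsD' : ∀ᵐ x ∂haarAddCircle, s x = -conj α' * (D' x / conj (D' x)))
    (hβ : conj β = β) (hβ' : conj β' = β')
    (h0 : β * fourierCoeff D 0 + β' * fourierCoeff D' 0 = 0) :
    ∀ᵐ x ∂haarAddCircle, β * D x + β' * D' x = 0 := by
  have hcomb : MemHplus (fun x => β * D x + β' * D' x) := (hD.const_mul β).add (hD'.const_mul β')
  have hplus : MemHplus (fun x => β * (-conj α * D x) + β' * (-conj α' * D' x)) :=
    ((hD.const_mul _).const_mul β).add ((hD'.const_mul _).const_mul β')
  have hminus : MemHminus (fun x => conj (β * D x + β' * D' x)) := by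
    have hcoeff := congrFun (fourierCoeff.add ((hD.const_mul β).1.integrable one_le_two)
      ((hD'.const_mul β').1.integrable one_le_two)) 0
    rw [Pi.add_apply, fourierCoeff.const_mul, fourierCoeff.const_mul, h0] at hcoeff
    exact hcomb.memHminus_conj hcoeff
  have hrel : ∀ᵐ x ∂haarAddCircle, conj (s x) * (β * (-conj α * D x) + β' * (-conj α' * D' x))
      = conj (β * D x + β' * D' x) := by
    filter_upwards [hDne, hD'ne, hsD, hsD'] with x hDx hD'x hsx hs'x
    rw [mul_add, mul_left_comm, mul_left_comm _ β', conj_mul_neg_conj_mul_of_eq_phase hα hDx hsx,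
      conj_mul_neg_conj_mul_of_eq_phase hα' hD'x hs'x, map_add, map_mul, map_mul, hβ, hβ']
  filter_upwards [(hcan _ _ hplus hminus hrel).2] with x hx
  simpa only [Pi.zero_apply, map_eq_zero] using hx

section ComplexOrder

open scoped ComplexOrder

theorem eq_of_ae_mul_eq {X : Type*} [MeasurableSpace X] {μ : Measure X} {f g : X → ℂ} {c c' : ℂ}
    (hc : 0 ≤ c) (hc' : 0 ≤ c') (h : ∀ᵐ x ∂μ, c' * f x = c * g x)
    (hfg : ∫ x, ‖f x‖ ^ 2 ∂μ = ∫ x, ‖g x‖ ^ 2 ∂μ) (hf : ∫ x, ‖f x‖ ^ 2 ∂μ ≠ 0) : c = c' := by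
  have hsq : ‖c'‖ ^ 2 * ∫ x, ‖f x‖ ^ 2 ∂μ = ‖c‖ ^ 2 * ∫ x, ‖f x‖ ^ 2 ∂μ := by
    calc ‖c'‖ ^ 2 * ∫ x, ‖f x‖ ^ 2 ∂μ = ∫ x, ‖c' * f x‖ ^ 2 ∂μ := by
          simp_rw [norm_mul, mul_pow, integral_const_mul]
      _ = ∫ x, ‖c * g x‖ ^ 2 ∂μ := integral_congr_ae (h.mono fun x hx => by simp only [hx])
      _ = ‖c‖ ^ 2 * ∫ x, ‖f x‖ ^ 2 ∂μ := by
          simp_rw [norm_mul, mul_pow, integral_const_mul, hfg]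
  have hnorm : ‖c‖ = ‖c'‖ :=
    (pow_left_inj₀ (norm_nonneg _) (norm_nonneg _) two_ne_zero).1 (mul_right_cancel₀ hf hsq).symm
  rw [← norm_of_nonneg' hc, ← norm_of_nonneg' hc', hnorm]

end ComplexOrder

theorem stmt5 (s D D' : AddCircle (2 * Real.pi) → ℂ) (α α' : ℂ)
    (hα : ‖α‖ = 1) (hα' : ‖α'‖ = 1)
    (hs : ∀ᵐ x ∂haarAddCircle, ‖s x‖ = 1)
    (hcan : ∀ hp hm : AddCircle (2 * Real.pi) → ℂ, MemHplus hp → MemHminus hm →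
      (∀ᵐ x ∂haarAddCircle, conj (s x) * hp x = hm x) →
      hp =ᵐ[haarAddCircle] 0 ∧ hm =ᵐ[haarAddCircle] 0)
    (hD : IsOuterH2 D) (hD' : IsOuterH2 D')
    (hD0 : 0 < (fourierCoeff D 0).re ∧ (fourierCoeff D 0).im = 0)
    (hD0' : 0 < (fourierCoeff D' 0).re ∧ (fourierCoeff D' 0).im = 0)
    (hnorm : ∫ x, ‖D x‖ ^ 2 ∂haarAddCircle = 1)
    (hnorm' : ∫ x, ‖D' x‖ ^ 2 ∂haarAddCircle = 1)
    (hsD : ∀ᵐ x ∂haarAddCircle, s x = -conj α * (D x / conj (D x)))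
    (hsD' : ∀ᵐ x ∂haarAddCircle, s x = -conj α' * (D' x / conj (D' x))) :
    D =ᵐ[haarAddCircle] D' ∧ α = α' := by
  set c := fourierCoeff D 0
  set c' := fourierCoeff D' 0
  open ComplexOrder in
  have hc : 0 < c := pos_iff.2 ⟨hD0.1, hD0.2.symm⟩
  open ComplexOrder in
  have hc' : 0 < c' := pos_iff.2 ⟨hD0'.1, hD0'.2.symm⟩
  have hDne := ae_ne_zero_of_norm_eq_one hs hsD
  have hcomb : ∀ᵐ x ∂haarAddCircle, c' * D x + -c * D' x = 0 :=
    ae_add_eq_zero_of_canonical hα hα' hcan hD.1 hD'.1 hDne (ae_ne_zero_of_norm_eq_one hs hsD')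
      hsD hsD' (conj_eq_iff_im.2 hD0'.2) (by rw [map_neg, conj_eq_iff_im.2 hD0.2]) (by ring)
  have hcc' : c = c' :=
    eq_of_ae_mul_eq hc.le hc'.le (hcomb.mono fun x hx => by linear_combination hx)
      (hnorm.trans hnorm'.symm) (by rw [hnorm]; exact one_ne_zero)
  have hDD' : D =ᵐ[haarAddCircle] D' := hcomb.mono fun x hx =>
    mul_left_cancel₀ hc'.ne' (by linear_combination hx + D' x * hcc')
  refine ⟨hDD', ?_⟩
  obtain ⟨x, hDx, hsx, hs'x, hx⟩ := (hDne.and (hsD.and (hsD'.and hDD'))).exists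
  rw [← hx] at hs'x
  have hphase : D x / conj (D x) ≠ 0 := div_ne_zero hDx ((map_ne_zero _).2 hDx)
  exact star_injective (neg_injective (mul_right_cancel₀ hphase (hsx.symm.trans hs'x)))
end

section
/- Let {f_n} be the Schur iterates: f_{n+1}(z) = (f_n(z) - f_n(0))/(z(1 - conj(f_n(0)) f_n(z))), with each f_n in the Schur class (analytic, |f_n| ≤ 1 on 𝔻, and |f_n(0)| < 1), φ_n(z) = z f_n(z), a_n = f_n(0), ρ_n = √(1 - |a_n|²). Then on the unit circle, |1 - conj(a_n) f_n(t)|² · (1 - |f_{n+1}(t)|²) = ρ_n² (1 - |f_n(t)|²) a.e.; consequently if ψ_n, ψ_{n+1} are outer functions with |ψ_n|² = 1 - |φ_n|² and |ψ_{n+1}|² = 1 - |φ_{n+1}|² and positive at 0, then ψ_{n+1} = ψ_n · ρ_n / (1 - conj(a_n) f_n) up to the outer normalization. -/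
/-! The Möbius identity `|1 - ā z|² - |z - a|² = (1 - |a|²)(1 - |z|²)` together with
`|f_{n+1}| · |1 - ā f_n| = |f_n - a|` on `|t| = 1` gives the boundary identity; the
statement about `ψ_n, ψ_{n+1}` is its square root, after `|t f| = |f|`. -/

open Complex ComplexConjugate

namespace Complex

theorem norm_one_sub_conj_mul_sq_sub_norm_sub_sq (a z : ℂ) :
    ‖1 - conj a * z‖ ^ 2 - ‖z - a‖ ^ 2 = (1 - ‖a‖ ^ 2) * (1 - ‖z‖ ^ 2) := by
  simp only [← normSq_eq_norm_sq, normSq_apply, sub_re, sub_im, mul_re, mul_im, conj_re, conj_im,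
    one_re, one_im]
  ring

variable {t a f g : ℂ}

theorem norm_one_sub_conj_mul_sq_mul_one_sub_norm_sq_of_schur_step (ht : ‖t‖ = 1)
    (hrec : g * (t * (1 - conj a * f)) = f - a) :
    ‖1 - conj a * f‖ ^ 2 * (1 - ‖g‖ ^ 2) = (1 - ‖a‖ ^ 2) * (1 - ‖f‖ ^ 2) := by
  have hnorm : ‖g‖ * ‖1 - conj a * f‖ = ‖f - a‖ := by
    simpa only [norm_mul, ht, one_mul] using congrArg norm hrec
  calc ‖1 - conj a * f‖ ^ 2 * (1 - ‖g‖ ^ 2)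
      = ‖1 - conj a * f‖ ^ 2 - (‖g‖ * ‖1 - conj a * f‖) ^ 2 := by ring
    _ = (1 - ‖a‖ ^ 2) * (1 - ‖f‖ ^ 2) := by
      rw [hnorm, norm_one_sub_conj_mul_sq_sub_norm_sub_sq]

theorem norm_mul_norm_one_sub_conj_mul_of_schur_step {ψ ψ₁ : ℂ} (ht : ‖t‖ = 1)
    (ha : ‖a‖ < 1) (hrec : g * (t * (1 - conj a * f)) = f - a)
    (hψ : ‖ψ‖ ^ 2 = 1 - ‖f‖ ^ 2) (hψ₁ : ‖ψ₁‖ ^ 2 = 1 - ‖g‖ ^ 2) :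
    ‖ψ₁‖ * ‖1 - conj a * f‖ = ‖ψ‖ * √(1 - ‖a‖ ^ 2) := by
  have ha' : 0 ≤ 1 - ‖a‖ ^ 2 := by nlinarith [norm_nonneg a]
  refine (sq_eq_sq₀ (by positivity) (by positivity)).1 ?_
  calc (‖ψ₁‖ * ‖1 - conj a * f‖) ^ 2
      = ‖1 - conj a * f‖ ^ 2 * (1 - ‖g‖ ^ 2) := by rw [mul_pow, hψ₁, mul_comm]
    _ = (1 - ‖a‖ ^ 2) * (1 - ‖f‖ ^ 2) :=
      norm_one_sub_conj_mul_sq_mul_one_sub_norm_sq_of_schur_step ht hrec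
    _ = (‖ψ‖ * √(1 - ‖a‖ ^ 2)) ^ 2 := by rw [mul_pow, Real.sq_sqrt ha', hψ, mul_comm]

end Complex

theorem stmt7_general (t a f f1 ψ ψ1 : ℂ)
    (ht : ‖t‖ = 1) (ha : ‖a‖ < 1)
    (hrec : f1 * (t * (1 - conj a * f)) = f - a) :
    ‖1 - conj a * f‖ ^ 2 * (1 - ‖f1‖ ^ 2) =
      (1 - ‖a‖ ^ 2) * (1 - ‖f‖ ^ 2) ∧
    (‖ψ‖ ^ 2 = 1 - ‖t * f‖ ^ 2 →
     ‖ψ1‖ ^ 2 = 1 - ‖t * f1‖ ^ 2 →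
     ‖ψ1‖ * ‖1 - conj a * f‖ =
       ‖ψ‖ * Real.sqrt (1 - ‖a‖ ^ 2)) := by
  refine ⟨Complex.norm_one_sub_conj_mul_sq_mul_one_sub_norm_sq_of_schur_step ht hrec,
    fun hψ hψ1 => ?_⟩
  rw [norm_mul, ht, one_mul] at hψ hψ1
  exact Complex.norm_mul_norm_one_sub_conj_mul_of_schur_step ht ha hrec hψ hψ1

theorem stmt7 (t a f f1 ψ ψ1 : ℂ)
    (ht : ‖t‖ = 1) (ha : ‖a‖ < 1) (hf : ‖f‖ ≤ 1)
    (hrec : f1 * (t * (1 - conj a * f)) = f - a) :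
    ‖1 - conj a * f‖ ^ 2 * (1 - ‖f1‖ ^ 2) =
      (1 - ‖a‖ ^ 2) * (1 - ‖f‖ ^ 2) ∧
    (‖ψ‖ ^ 2 = 1 - ‖t * f‖ ^ 2 →
     ‖ψ1‖ ^ 2 = 1 - ‖t * f1‖ ^ 2 →
     ‖ψ1‖ * ‖1 - conj a * f‖ =
       ‖ψ‖ * Real.sqrt (1 - ‖a‖ ^ 2)) :=
  stmt7_general t a f f1 ψ ψ1 ht ha hrec
end

section
/- With 𝓟_n^j, 𝓠_n^j as above, for 0 ≤ j ≤ n the determinant-type identity 𝓟_n^0(z) 𝓠_n^j(z) - 𝓠_n^0(z) 𝓟_n^j(z) = z^{n-j} 𝓟_j^0(z) holds for all z ∈ ℂ. -/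
open Complex ComplexConjugate Polynomial

/-- The column vectors `[𝓟_n^j; 𝓠_n^j]` of the ordered `2×2` matrix products
`∏^←_{k=j}^{n-1} (1/ρ_k) [[z, conj a_k], [a_k z, 1]]` applied to `[0; 1]`;
the argument `m` stands for `n - j`. -/
noncomputable def schurPQ (a : ℕ → ℂ) (j : ℕ) : ℕ → Polynomial ℂ × Polynomial ℂ
  | 0 => (0, 1)
  | m + 1 =>
    let pq := schurPQ a j m
    let k := j + m
    (((Real.sqrt (1 - ‖a k‖ ^ 2) : ℝ) : ℂ)⁻¹ •
        (Polynomial.X * pq.1 + Polynomial.C (conj (a k)) * pq.2),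
     ((Real.sqrt (1 - ‖a k‖ ^ 2) : ℝ) : ℂ)⁻¹ •
        (Polynomial.C (a k) * Polynomial.X * pq.1 + pq.2))

lemma schurPQ_key (a : ℕ → ℂ) (ha : ∀ k, ‖a k‖ < 1) (j : ℕ) (z : ℂ) : ∀ m : ℕ,
    ((schurPQ a 0 (j + m)).1.eval z) * ((schurPQ a j m).2.eval z) -
      ((schurPQ a 0 (j + m)).2.eval z) * ((schurPQ a j m).1.eval z) =
    z ^ m * ((schurPQ a 0 j).1.eval z) := by
  intro m
  induction m with
  | zero => simp [schurPQ]
  | succ m ih =>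
    have hlt : ‖a (j + m)‖ ^ 2 < 1 := by
      have := ha (j + m); nlinarith [norm_nonneg (a (j + m))]
    have hpos : (0:ℝ) < 1 - ‖a (j + m)‖ ^ 2 := by linarith
    have hr0 : ((Real.sqrt (1 - ‖a (j + m)‖ ^ 2) : ℝ) : ℂ) ≠ 0 := by
      exact_mod_cast (Real.sqrt_pos.mpr hpos).ne'
    have hadd : j + (m + 1) = (j + m) + 1 := rfl
    have hk : 0 + (j + m) = j + m := by ring
    rw [hadd]
    simp only [schurPQ, hk, eval_smul, eval_add, eval_mul, eval_X, eval_C, smul_eq_mul]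
    set u : ℂ := ((Real.sqrt (1 - ‖a (j + m)‖ ^ 2) : ℝ) : ℂ) with hudef
    have hca : conj (a (j + m)) * a (j + m) = ((‖a (j + m)‖ : ℂ)) ^ 2 := by
      rw [mul_comm, Complex.mul_conj']
    have hr2 : u * u = 1 - ((‖a (j + m)‖ : ℂ)) ^ 2 := by
      rw [hudef, ← Complex.ofReal_mul, Real.mul_self_sqrt hpos.le]; push_cast; ring
    have hinv : u⁻¹ * u = 1 := inv_mul_cancel₀ hr0
    set P := (schurPQ a 0 (j + m)).1.eval z
    set Q := (schurPQ a 0 (j + m)).2.eval z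
    set p := (schurPQ a j m).1.eval z
    set q := (schurPQ a j m).2.eval z
    set D := P * q - Q * p with hD
    rw [pow_succ]
    linear_combination -(u⁻¹ * u⁻¹ * z * D) * hr2 - (u⁻¹ * u⁻¹ * z * D) * hca +
      z * D * (u⁻¹ * u + 1) * hinv + z * ih

theorem stmt10 (a : ℕ → ℂ) (ha : ∀ k, ‖a k‖ < 1) (j n : ℕ) (hjn : j ≤ n) :
    ∀ z : ℂ,
      ((schurPQ a 0 n).1.eval z) * ((schurPQ a j (n - j)).2.eval z) -
        ((schurPQ a 0 n).2.eval z) * ((schurPQ a j (n - j)).1.eval z) =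
      z ^ (n - j) * ((schurPQ a 0 j).1.eval z) := by
  intro z
  obtain ⟨m, rfl⟩ := Nat.exists_eq_add_of_le hjn
  have h : j + m - j = m := by omega
  rw [h]
  exact schurPQ_key a ha j z m
end

section
/- Define 𝓔_n^j = 𝓟_n^j/𝓠_n^j for n ≥ j. Then 𝓔_j^j = 0 and 𝓔_{n+1}^j = (z 𝓔_n^j + conj(a_n))/(1 + a_n z 𝓔_n^j), and each 𝓔_n^j is analytic on the closed unit disk with sup_{|z| ≤ 1} |𝓔_n^j(z)| < 1. -/
/-! The invariant is `‖𝓟_n^j(z)‖ < ‖𝓠_n^j(z)‖` on the closed disk. It propagates through one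
matrix factor by the identity `‖a p + q‖² - ‖p + conj a q‖² = (1 - ‖a‖²)(‖q‖² - ‖p‖²)`
applied to `p = z 𝓟`, `q = 𝓠`; dividing by `𝓠` gives the Möbius recursion for `𝓔 = 𝓟 / 𝓠`,
and the pointwise bound `‖𝓔‖ < 1` becomes uniform by compactness of the closed disk. -/

open Complex ComplexConjugate Polynomial

/-- The rational functions `𝓔_n^j = 𝓟_n^j / 𝓠_n^j`; the argument `m` stands for `n - j`. -/
noncomputable def schurE (a : ℕ → ℂ) (j m : ℕ) (z : ℂ) : ℂ :=
  (schurPQ a j m).1.eval z / (schurPQ a j m).2.eval z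

lemma norm_sq_mul_add_sub_norm_sq_add_conj_mul (α p q : ℂ) :
    ‖α * p + q‖ ^ 2 - ‖p + conj α * q‖ ^ 2 = (1 - ‖α‖ ^ 2) * (‖q‖ ^ 2 - ‖p‖ ^ 2) := by
  simp only [← Complex.normSq_eq_norm_sq, Complex.normSq_apply, Complex.add_re, Complex.add_im,
    Complex.mul_re, Complex.mul_im, Complex.conj_re, Complex.conj_im]
  ring

lemma norm_add_conj_mul_lt_norm_mul_add {α p q : ℂ} (hα : ‖α‖ < 1) (hpq : ‖p‖ < ‖q‖) :
    ‖p + conj α * q‖ < ‖α * p + q‖ := by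
  have hα2 : 0 < 1 - ‖α‖ ^ 2 := by nlinarith [norm_nonneg α]
  have hpq2 : 0 < ‖q‖ ^ 2 - ‖p‖ ^ 2 := by nlinarith [norm_nonneg p]
  have key := norm_sq_mul_add_sub_norm_sq_add_conj_mul α p q
  have : ‖p + conj α * q‖ ^ 2 < ‖α * p + q‖ ^ 2 := by nlinarith [mul_pos hα2 hpq2]
  exact lt_of_pow_lt_pow_left₀ 2 (norm_nonneg _) this

lemma inv_sqrt_one_sub_norm_sq_ne_zero {α : ℂ} (hα : ‖α‖ < 1) :
    ((Real.sqrt (1 - ‖α‖ ^ 2) : ℝ) : ℂ)⁻¹ ≠ 0 := by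
  have : 0 < Real.sqrt (1 - ‖α‖ ^ 2) := Real.sqrt_pos.mpr (by nlinarith [norm_nonneg α])
  exact inv_ne_zero (Complex.ofReal_ne_zero.mpr this.ne')

section schur

variable (a : ℕ → ℂ) (j : ℕ)

lemma schurPQ_fst_eval_succ (m : ℕ) (z : ℂ) :
    (schurPQ a j (m + 1)).1.eval z = ((Real.sqrt (1 - ‖a (j + m)‖ ^ 2) : ℝ) : ℂ)⁻¹ *
      (z * (schurPQ a j m).1.eval z + conj (a (j + m)) * (schurPQ a j m).2.eval z) := by
  simp [schurPQ, smul_eq_mul, mul_add]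

lemma schurPQ_snd_eval_succ (m : ℕ) (z : ℂ) :
    (schurPQ a j (m + 1)).2.eval z = ((Real.sqrt (1 - ‖a (j + m)‖ ^ 2) : ℝ) : ℂ)⁻¹ *
      (a (j + m) * (z * (schurPQ a j m).1.eval z) + (schurPQ a j m).2.eval z) := by
  simp [schurPQ, smul_eq_mul, mul_assoc, mul_add]

variable {a}

lemma norm_schurPQ_fst_lt_snd (ha : ∀ k, ‖a k‖ < 1) (m : ℕ) {z : ℂ} (hz : ‖z‖ ≤ 1) :
    ‖(schurPQ a j m).1.eval z‖ < ‖(schurPQ a j m).2.eval z‖ := by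
  induction m with
  | zero => simp [schurPQ]
  | succ m ih =>
    have hzP : ‖z * (schurPQ a j m).1.eval z‖ < ‖(schurPQ a j m).2.eval z‖ := by
      rw [norm_mul]
      exact lt_of_le_of_lt (mul_le_of_le_one_left (norm_nonneg _) hz) ih
    rw [schurPQ_fst_eval_succ, schurPQ_snd_eval_succ, norm_mul, norm_mul]
    exact mul_lt_mul_of_pos_left (norm_add_conj_mul_lt_norm_mul_add (ha _) hzP)
      (norm_pos_iff.mpr (inv_sqrt_one_sub_norm_sq_ne_zero (ha _)))

lemma schurPQ_snd_eval_ne_zero (ha : ∀ k, ‖a k‖ < 1) (m : ℕ) {z : ℂ} (hz : ‖z‖ ≤ 1) :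
    (schurPQ a j m).2.eval z ≠ 0 :=
  norm_pos_iff.mp ((norm_nonneg _).trans_lt (norm_schurPQ_fst_lt_snd j ha m hz))

lemma schurE_succ (ha : ∀ k, ‖a k‖ < 1) (m : ℕ) {z : ℂ} (hz : ‖z‖ ≤ 1) :
    schurE a j (m + 1) z =
      (z * schurE a j m z + conj (a (j + m))) / (1 + a (j + m) * z * schurE a j m z) := by
  have hQ := schurPQ_snd_eval_ne_zero j ha m hz
  rw [schurE, schurPQ_fst_eval_succ, schurPQ_snd_eval_succ,
    mul_div_mul_left _ _ (inv_sqrt_one_sub_norm_sq_ne_zero (ha _)), schurE,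
    ← div_div_div_cancel_right₀ hQ]
  congr 1
  · field_simp
  · field_simp; ring

lemma norm_schurE_lt_one (ha : ∀ k, ‖a k‖ < 1) (m : ℕ) {z : ℂ} (hz : ‖z‖ ≤ 1) :
    ‖schurE a j m z‖ < 1 := by
  rw [schurE, norm_div, div_lt_one (norm_pos_iff.mpr (schurPQ_snd_eval_ne_zero j ha m hz))]
  exact norm_schurPQ_fst_lt_snd j ha m hz

lemma continuousOn_schurE (ha : ∀ k, ‖a k‖ < 1) (m : ℕ) :
    ContinuousOn (schurE a j m) (Metric.closedBall 0 1) := by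
  refine (Polynomial.continuousOn _).div (Polynomial.continuousOn _) fun z hz => ?_
  exact schurPQ_snd_eval_ne_zero j ha m (mem_closedBall_zero_iff.mp hz)

end schur

lemma IsCompact.exists_lt_forall_le_of_forall_lt {X : Type*} [TopologicalSpace X] {s : Set X}
    {f : X → ℝ} {b : ℝ} (hs : IsCompact s) (hf : ContinuousOn f s) (hb : ∀ x ∈ s, f x < b) :
    ∃ c < b, ∀ x ∈ s, f x ≤ c := by
  rcases s.eq_empty_or_nonempty with rfl | hne
  · exact ⟨b - 1, by linarith, by simp⟩
  · obtain ⟨x₀, hx₀, hmax⟩ := hs.exists_isMaxOn hne hf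
    exact ⟨f x₀, hb x₀ hx₀, hmax⟩

theorem stmt11 (a : ℕ → ℂ) (ha : ∀ k, ‖a k‖ < 1) (j : ℕ) :
    (∀ z : ℂ, schurE a j 0 z = 0) ∧
    (∀ m : ℕ, ∀ z : ℂ, ‖z‖ ≤ 1 →
      schurE a j (m + 1) z =
        (z * schurE a j m z + conj (a (j + m))) / (1 + a (j + m) * z * schurE a j m z)) ∧
    (∀ m : ℕ, ∀ z : ℂ, ‖z‖ ≤ 1 → (schurPQ a j m).2.eval z ≠ 0) ∧
    (∀ m : ℕ, ∃ c : ℝ, c < 1 ∧ ∀ z : ℂ, ‖z‖ ≤ 1 → ‖schurE a j m z‖ ≤ c) := by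
  refine ⟨fun z => by simp [schurE, schurPQ], fun m z hz => schurE_succ j ha m hz,
    fun m z hz => schurPQ_snd_eval_ne_zero j ha m hz, fun m => ?_⟩
  obtain ⟨c, hc, hle⟩ := (isCompact_closedBall (0 : ℂ) 1).exists_lt_forall_le_of_forall_lt
    (continuousOn_schurE j ha m).norm fun z hz => norm_schurE_lt_one j ha m (mem_closedBall_zero_iff.mp hz)
  exact ⟨c, hc, fun z hz => hle z (mem_closedBall_zero_iff.mpr hz)⟩
end

section
/- With 𝓔_n^0 and 𝓔_n^j as above (0 ≤ j ≤ n), the difference 𝓔_n^0(z) - 𝓔_n^j(z) = z^{n-j} 𝓟_j^0(z)/(𝓠_n^0(z) 𝓠_n^j(z)); in particular 𝓔_n^0 - 𝓔_n^j vanishes at the origin to order at least n - j. -/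
open Complex ComplexConjugate Polynomial

lemma schurPQ_succ (a : ℕ → ℂ) (j m : ℕ) :
    schurPQ a j (m + 1) =
      (((√(1 - ‖a (j + m)‖ ^ 2) : ℝ) : ℂ)⁻¹ •
          (X * (schurPQ a j m).1 + C (conj (a (j + m))) * (schurPQ a j m).2),
        ((√(1 - ‖a (j + m)‖ ^ 2) : ℝ) : ℂ)⁻¹ •
          (C (a (j + m)) * X * (schurPQ a j m).1 + (schurPQ a j m).2)) :=
  rfl

lemma inv_sqrt_one_sub_norm_sq_sq_mul {b : ℂ} (hb : ‖b‖ < 1) :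
    ((√(1 - ‖b‖ ^ 2) : ℝ) : ℂ)⁻¹ ^ 2 * (1 - conj b * b) = 1 := by
  have hpos : 0 < 1 - ‖b‖ ^ 2 := by nlinarith [norm_nonneg b]
  have hsq : ((√(1 - ‖b‖ ^ 2) : ℝ) : ℂ) ^ 2 = 1 - conj b * b := by
    rw [← ofReal_pow, Real.sq_sqrt hpos.le, conj_mul']
    push_cast
    rfl
  rw [← hsq, inv_pow, inv_mul_cancel₀]
  exact pow_ne_zero _ (ofReal_ne_zero.mpr (Real.sqrt_pos.mpr hpos).ne')

theorem schurPQ_det (a : ℕ → ℂ) (ha : ∀ k, ‖a k‖ < 1) (j m : ℕ) :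
    (schurPQ a 0 (j + m)).1 * (schurPQ a j m).2 - (schurPQ a 0 (j + m)).2 * (schurPQ a j m).1 =
      X ^ m * (schurPQ a 0 j).1 := by
  induction m with
  | zero => simp [schurPQ]
  | succ m ih =>
    have hρ := congrArg C (inv_sqrt_one_sub_norm_sq_sq_mul (ha (j + m)))
    simp only [C_mul, C_pow, C_sub, C_1] at hρ
    rw [← add_assoc, schurPQ_succ, schurPQ_succ, zero_add]
    simp only [smul_eq_C_mul]
    linear_combination
      X * ((schurPQ a 0 (j + m)).1 * (schurPQ a j m).2
        - (schurPQ a 0 (j + m)).2 * (schurPQ a j m).1) * hρ + X * ih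

lemma norm_add_conj_mul_le_norm_mul_add {b u v : ℂ} (hb : ‖b‖ ≤ 1) (huv : ‖u‖ ≤ ‖v‖) :
    ‖u + conj b * v‖ ≤ ‖b * u + v‖ := by
  have hdiff : normSq (b * u + v) - normSq (u + conj b * v) =
      (1 - normSq b) * (normSq v - normSq u) := by
    simp only [normSq_add, normSq_conj, map_mul, conj_conj]
    ring_nf
  have hb2 : normSq b ≤ 1 := by rw [normSq_eq_norm_sq]; nlinarith [norm_nonneg b]
  have huv2 : normSq u ≤ normSq v := by
    rw [normSq_eq_norm_sq, normSq_eq_norm_sq]; nlinarith [norm_nonneg u]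
  rw [norm_def, norm_def]
  exact Real.sqrt_le_sqrt (by nlinarith)

lemma mul_add_ne_zero_of_norm_le {b u v : ℂ} (hb : ‖b‖ < 1) (huv : ‖u‖ ≤ ‖v‖) (hv : v ≠ 0) :
    b * u + v ≠ 0 := by
  have hlt : ‖b * u‖ < ‖v‖ := by
    rw [norm_mul]
    calc ‖b‖ * ‖u‖ ≤ ‖b‖ * ‖v‖ := by gcongr
      _ < 1 * ‖v‖ := by gcongr
      _ = ‖v‖ := one_mul _
  intro h
  rw [show v = -(b * u) by linear_combination h, norm_neg] at hlt
  exact lt_irrefl _ hlt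

lemma eval_schurPQ_succ_fst (a : ℕ → ℂ) (j m : ℕ) (z : ℂ) :
    (schurPQ a j (m + 1)).1.eval z = ((√(1 - ‖a (j + m)‖ ^ 2) : ℝ) : ℂ)⁻¹ *
      (z * (schurPQ a j m).1.eval z + conj (a (j + m)) * (schurPQ a j m).2.eval z) := by
  simp [schurPQ_succ, mul_add]

lemma eval_schurPQ_succ_snd (a : ℕ → ℂ) (j m : ℕ) (z : ℂ) :
    (schurPQ a j (m + 1)).2.eval z = ((√(1 - ‖a (j + m)‖ ^ 2) : ℝ) : ℂ)⁻¹ *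
      (a (j + m) * (z * (schurPQ a j m).1.eval z) + (schurPQ a j m).2.eval z) := by
  simp [schurPQ_succ, mul_add, mul_assoc]

theorem norm_eval_schurPQ_fst_le_snd (a : ℕ → ℂ) (ha : ∀ k, ‖a k‖ ≤ 1) (j m : ℕ) {z : ℂ}
    (hz : ‖z‖ ≤ 1) : ‖(schurPQ a j m).1.eval z‖ ≤ ‖(schurPQ a j m).2.eval z‖ := by
  induction m with
  | zero => simp [schurPQ]
  | succ m ih =>
    rw [eval_schurPQ_succ_fst, eval_schurPQ_succ_snd, norm_mul, norm_mul]
    refine mul_le_mul_of_nonneg_left (norm_add_conj_mul_le_norm_mul_add (ha _) ?_) (norm_nonneg _)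
    rw [norm_mul]
    exact (mul_le_of_le_one_left (norm_nonneg _) hz).trans ih

theorem eval_schurPQ_snd_ne_zero (a : ℕ → ℂ) (ha : ∀ k, ‖a k‖ < 1) (j m : ℕ) {z : ℂ}
    (hz : ‖z‖ ≤ 1) : (schurPQ a j m).2.eval z ≠ 0 := by
  induction m with
  | zero => simp [schurPQ]
  | succ m ih =>
    have hρ := (pow_ne_zero_iff two_ne_zero).mp
      (left_ne_zero_of_mul_eq_one (inv_sqrt_one_sub_norm_sq_sq_mul (ha (j + m))))
    have hzP : ‖z * (schurPQ a j m).1.eval z‖ ≤ ‖(schurPQ a j m).2.eval z‖ := by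
      rw [norm_mul]
      exact (mul_le_of_le_one_left (norm_nonneg _) hz).trans
        (norm_eval_schurPQ_fst_le_snd a (fun k ↦ (ha k).le) j m hz)
    rw [eval_schurPQ_succ_snd]
    exact mul_ne_zero hρ (mul_add_ne_zero_of_norm_le (ha (j + m)) hzP ih)

theorem schurE_sub_schurE (a : ℕ → ℂ) (ha : ∀ k, ‖a k‖ < 1) (j m : ℕ) {z : ℂ} (hz : ‖z‖ ≤ 1) :
    schurE a 0 (j + m) z - schurE a j m z =
      z ^ m * (schurPQ a 0 j).1.eval z /
        ((schurPQ a 0 (j + m)).2.eval z * (schurPQ a j m).2.eval z) := by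
  have hdet := congrArg (eval z) (schurPQ_det a ha j m)
  simp only [eval_sub, eval_mul, eval_pow, eval_X] at hdet
  rw [schurE, schurE, div_sub_div _ _ (eval_schurPQ_snd_ne_zero a ha 0 _ hz)
    (eval_schurPQ_snd_ne_zero a ha j m hz), hdet]

theorem stmt12 (a : ℕ → ℂ) (ha : ∀ k, ‖a k‖ < 1) (j n : ℕ) (hjn : j ≤ n) :
    (∀ z : ℂ, ‖z‖ ≤ 1 →
      schurE a 0 n z - schurE a j (n - j) z =
        z ^ (n - j) * ((schurPQ a 0 j).1.eval z) /
          (((schurPQ a 0 n).2.eval z) * ((schurPQ a j (n - j)).2.eval z))) ∧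
    ∃ g : ℂ → ℂ, AnalyticAt ℂ g 0 ∧
      ∀ᶠ z in nhds (0 : ℂ), schurE a 0 n z - schurE a j (n - j) z = z ^ (n - j) * g z := by
  obtain ⟨m, rfl⟩ := Nat.exists_eq_add_of_le hjn
  rw [Nat.add_sub_cancel_left]
  have hformula := fun z (hz : ‖z‖ ≤ 1) ↦ schurE_sub_schurE a ha j m hz
  refine ⟨hformula, fun z ↦ (schurPQ a 0 j).1.eval z /
      ((schurPQ a 0 (j + m)).2.eval z * (schurPQ a j m).2.eval z), ?_, ?_⟩
  · have hpoly (p : ℂ[X]) : AnalyticAt ℂ (fun z ↦ p.eval z) 0 :=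
      AnalyticOnNhd.eval_polynomial p 0 trivial
    have h0 : ‖(0 : ℂ)‖ ≤ 1 := by simp
    exact (hpoly _).div ((hpoly _).mul (hpoly _)) (mul_ne_zero
      (eval_schurPQ_snd_ne_zero a ha 0 _ h0)
      (eval_schurPQ_snd_ne_zero a ha j m h0))
  · filter_upwards [Metric.closedBall_mem_nhds (0 : ℂ) one_pos] with z hz
    rw [hformula z (mem_closedBall_zero_iff.mp hz), mul_div_assoc]
end

section
/- Let 𝓛 be the lower-triangular transformation matrix with entries 𝓛_{nm} = (ψ_n/(1 + 𝓔_n φ_n))_{n-m} (the (n-m)-th Taylor coefficient), so 𝓛_{nm} = 0 for m > n and 𝓛_{nn} = ψ_n(0) = ∏_{k=n}^∞ ρ_k > 0. Then the formal inverse matrix has entries 𝓛^{-1}_{nm} = (1/ψ_m)_{n-m}, i.e., for all n ≥ j: Σ_{m=j}^{n} 𝓛_{nm} (1/ψ_j)_{m-j} = δ_{nj}. -/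
open Complex ComplexConjugate Polynomial

/-- The `k`-th Taylor coefficient at the origin. -/
noncomputable def taylorCoeff (g : ℂ → ℂ) (k : ℕ) : ℂ :=
  iteratedDeriv k g 0 / (Nat.factorial k : ℂ)

/-!
The sum is the `(n - j)`-th Taylor coefficient of `ψ_n / (ψ_j (1 + 𝓔_n · z f_n))` (Cauchy
product). Iterating the Schur step gives `ψ_n = ψ_j (𝓠_n^j + 𝓟_n^j · z f_n)`, and the
determinant identity `𝓟_n 𝓠_n^j - 𝓟_n^j 𝓠_n = z^(n-j) 𝓟_j` shows that this quotient is
`𝓠_n^j + O(z^(n-j+1))`. Since `𝓠_n^n = 1` and `deg 𝓠_n^j < n - j` for `j < n`, the coefficient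
is `δ_nj`.
-/

open Filter Topology

lemma taylorCoeff_zero (g : ℂ → ℂ) : taylorCoeff g 0 = g 0 := by
  simp [taylorCoeff]

lemma Filter.EventuallyEq.taylorCoeff_eq {g h : ℂ → ℂ} (hgh : g =ᶠ[𝓝 0] h) (k : ℕ) :
    taylorCoeff g k = taylorCoeff h k := by
  rw [taylorCoeff, taylorCoeff, hgh.iteratedDeriv_eq]

lemma taylorCoeff_sub {g h : ℂ → ℂ} (hg : AnalyticAt ℂ g 0) (hh : AnalyticAt ℂ h 0) (k : ℕ) :
    taylorCoeff (fun z => g z - h z) k = taylorCoeff g k - taylorCoeff h k := by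
  rw [taylorCoeff, taylorCoeff, taylorCoeff, iteratedDeriv_fun_sub hg.contDiffAt hh.contDiffAt,
    sub_div]

lemma taylorCoeff_mul {g h : ℂ → ℂ} (hg : AnalyticAt ℂ g 0) (hh : AnalyticAt ℂ h 0) (k : ℕ) :
    taylorCoeff (fun z => g z * h z) k =
      ∑ i ∈ Finset.range (k + 1), taylorCoeff g i * taylorCoeff h (k - i) := by
  rw [taylorCoeff, iteratedDeriv_fun_mul hg.contDiffAt hh.contDiffAt, Finset.sum_div]
  refine Finset.sum_congr rfl fun i hi => ?_
  have hik : i ≤ k := Nat.lt_succ_iff.mp (Finset.mem_range.mp hi)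
  have hchoose : (k.choose i : ℂ) * i.factorial * (k - i).factorial = k.factorial := by
    exact_mod_cast Nat.choose_mul_factorial_mul_factorial hik
  have hchoose_ne : (k.choose i : ℂ) ≠ 0 := Nat.cast_ne_zero.mpr (Nat.choose_pos hik).ne'
  rw [taylorCoeff, taylorCoeff, ← hchoose]
  field_simp

lemma iteratedDeriv_polynomial_eval {𝕜 : Type*} [NontriviallyNormedField 𝕜] (P : 𝕜[X]) (k : ℕ) :
    iteratedDeriv k (fun z => P.eval z) = fun z => (derivative^[k] P).eval z := by
  induction k with
  | zero => simp
  | succ k ih =>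
    ext z
    rw [iteratedDeriv_succ, ih, Polynomial.deriv, Function.iterate_succ_apply']

lemma taylorCoeff_polynomial_eval (P : ℂ[X]) (k : ℕ) :
    taylorCoeff (fun z => P.eval z) k = P.coeff k := by
  rw [taylorCoeff, iteratedDeriv_polynomial_eval]
  dsimp only
  rw [← coeff_zero_eq_eval_zero,
    coeff_iterate_derivative, zero_add, Nat.descFactorial_self, nsmul_eq_mul,
    mul_div_cancel_left₀ _ (Nat.cast_ne_zero.mpr k.factorial_ne_zero)]

lemma taylorCoeff_pow_mul_of_lt {h : ℂ → ℂ} (hh : AnalyticAt ℂ h 0) {d k : ℕ} (hk : k < d) :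
    taylorCoeff (fun z => z ^ d * h z) k = 0 := by
  rw [taylorCoeff_mul (by fun_prop) hh]
  refine Finset.sum_eq_zero fun i hi => ?_
  have hpow := taylorCoeff_polynomial_eval (X ^ d) i
  simp only [eval_pow, eval_X, coeff_X_pow] at hpow
  rw [hpow, if_neg (by grind), zero_mul]

lemma taylorCoeff_eq_coeff_of_eventuallyEq {g h : ℂ → ℂ} {Q : ℂ[X]} {d : ℕ}
    (hh : AnalyticAt ℂ h 0) (hg : g =ᶠ[𝓝 0] fun z => Q.eval z - z ^ (d + 1) * h z) :
    taylorCoeff g d = Q.coeff d := by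
  rw [hg.taylorCoeff_eq, taylorCoeff_sub (Q.differentiable.analyticAt 0)
    (by fun_prop : AnalyticAt ℂ (fun z => z ^ (d + 1) * h z) 0), taylorCoeff_polynomial_eval,
    taylorCoeff_pow_mul_of_lt hh d.lt_succ_self, sub_zero]

lemma sum_Icc_taylorCoeff_mul_taylorCoeff {g h : ℂ → ℂ} (hg : AnalyticAt ℂ g 0)
    (hh : AnalyticAt ℂ h 0) (j d : ℕ) :
    ∑ m ∈ Finset.Icc j (j + d), taylorCoeff g (j + d - m) * taylorCoeff h (m - j) =
      taylorCoeff (fun z => g z * h z) d := by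
  rw [taylorCoeff_mul hg hh]
  refine Finset.sum_nbij' (fun m => j + d - m) (fun i => j + d - i) ?_ ?_ ?_ ?_ ?_ <;>
    intro m hm <;> simp only [Finset.mem_Icc, Finset.mem_range] at hm ⊢
  all_goals first | omega | rw [show d - (j + d - m) = m - j by omega]

lemma ofReal_sqrt_one_sub_norm_sq_sq {x : ℂ} (hx : ‖x‖ ≤ 1) :
    ((Real.sqrt (1 - ‖x‖ ^ 2) : ℝ) : ℂ) ^ 2 = 1 - conj x * x := by
  rw [← ofReal_pow, Real.sq_sqrt (by nlinarith [norm_nonneg x]), conj_mul']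
  push_cast
  ring

lemma ofReal_sqrt_one_sub_norm_sq_ne_zero {x : ℂ} (hx : ‖x‖ < 1) :
    ((Real.sqrt (1 - ‖x‖ ^ 2) : ℝ) : ℂ) ≠ 0 := by
  rw [ofReal_ne_zero, Real.sqrt_ne_zero']
  nlinarith [norm_nonneg x]

namespace schurPQ

variable (a : ℕ → ℂ)

lemma succ (j m : ℕ) :
    schurPQ a j (m + 1) =
      (((Real.sqrt (1 - ‖a (j + m)‖ ^ 2) : ℝ) : ℂ)⁻¹ •
        (X * (schurPQ a j m).1 + C (conj (a (j + m))) * (schurPQ a j m).2),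
       ((Real.sqrt (1 - ‖a (j + m)‖ ^ 2) : ℝ) : ℂ)⁻¹ •
        (C (a (j + m)) * X * (schurPQ a j m).1 + (schurPQ a j m).2)) := rfl

lemma natDegree_le (j d : ℕ) :
    (schurPQ a j (d + 1)).1.natDegree ≤ d ∧ (schurPQ a j (d + 1)).2.natDegree ≤ d := by
  induction d with
  | zero =>
    simp only [schurPQ, mul_zero, mul_one, zero_add, smul_eq_C_mul, ← C_mul, natDegree_C, le_refl,
      and_self]
  | succ d ih =>
    obtain ⟨hP, hQ⟩ := ih
    have hXP : (X * (schurPQ a j (d + 1)).1).natDegree ≤ d + 1 :=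
      natDegree_mul_le.trans (by rw [natDegree_X]; omega)
    rw [succ]
    refine ⟨(natDegree_smul_le _ _).trans (natDegree_add_le_of_degree_le hXP
        ((natDegree_C_mul_le _ _).trans (by omega))),
      (natDegree_smul_le _ _).trans (natDegree_add_le_of_degree_le ?_ (by omega))⟩
    rw [mul_assoc]
    exact (natDegree_C_mul_le _ _).trans hXP

lemma snd_coeff_self (j d : ℕ) : (schurPQ a j d).2.coeff d = if d = 0 then 1 else 0 := by
  rcases d with _ | d
  · simp [schurPQ]
  · exact coeff_eq_zero_of_natDegree_lt ((natDegree_le a j d).2.trans_lt d.lt_succ_self)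

variable {a}

lemma snd_eval_zero_ne_zero (ha : ∀ k, ‖a k‖ < 1) (j d : ℕ) : (schurPQ a j d).2.eval 0 ≠ 0 := by
  induction d with
  | zero => simp [schurPQ]
  | succ d ih =>
    simpa [succ, ih] using ofReal_sqrt_one_sub_norm_sq_ne_zero (ha (j + d))

lemma det (ha : ∀ k, ‖a k‖ < 1) (i j d : ℕ) :
    (schurPQ a i (j + d)).1 * (schurPQ a (i + j) d).2 -
        (schurPQ a (i + j) d).1 * (schurPQ a i (j + d)).2 =
      X ^ d * (schurPQ a i j).1 := by
  induction d with
  | zero => simp [schurPQ]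
  | succ d ih =>
    rw [← add_assoc j, succ, succ, ← add_assoc i j d]
    have hr := ofReal_sqrt_one_sub_norm_sq_ne_zero (ha (i + j + d))
    have hr2 := ofReal_sqrt_one_sub_norm_sq_sq (ha (i + j + d)).le
    set r := ((Real.sqrt (1 - ‖a (i + j + d)‖ ^ 2) : ℝ) : ℂ)
    set α := a (i + j + d)
    set P := (schurPQ a i (j + d)).1
    set Q := (schurPQ a i (j + d)).2
    set P' := (schurPQ a (i + j) d).1
    set Q' := (schurPQ a (i + j) d).2
    have hcross : (X * P + C (conj α) * Q) * (C α * X * P' + Q') -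
        (X * P' + C (conj α) * Q') * (C α * X * P + Q) = C (r ^ 2) * X * (P * Q' - P' * Q) := by
      rw [hr2, C_sub, C_1, C_mul]
      ring
    have hC : C (r⁻¹ * r⁻¹) * C (r ^ 2) = 1 := by
      rw [← C_mul, show r⁻¹ * r⁻¹ * r ^ 2 = 1 by field_simp, C_1]
    rw [smul_mul_smul_comm, smul_mul_smul_comm, ← smul_sub, hcross, ih, smul_eq_C_mul]
    linear_combination (X ^ (d + 1) * (schurPQ a i j).1) * hC

end schurPQ

lemma one_sub_conj_mul_ne_zero {α φ φ' z : ℂ} (hα : ‖α‖ < 1)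
    (hrec : φ' * (z * (1 - conj α * φ)) = φ - α) : 1 - conj α * φ ≠ 0 := by
  intro h
  rw [h, mul_zero, mul_zero, eq_comm, sub_eq_zero] at hrec
  subst hrec
  exact pow_ne_zero 2 (ofReal_sqrt_one_sub_norm_sq_ne_zero hα)
    ((ofReal_sqrt_one_sub_norm_sq_sq hα.le).trans h)

/-- The Schur step `φ ↦ φ'` transforms `q + p · zφ` exactly as one factor of `schurPQ` does. -/
lemma schur_step_mobius {α φ φ' z p q : ℂ} (hrec : φ' * (z * (1 - conj α * φ)) = φ - α) :
    (α * z * p + q + (z * p + conj α * q) * (z * φ')) * (1 - conj α * φ) =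
      (1 - conj α * α) * (q + p * (z * φ)) := by
  linear_combination (z * p + conj α * q) * hrec

lemma eq_mul_eval_schurPQ {a φ Ψ : ℕ → ℂ} {z : ℂ} (ha : ∀ n, ‖a n‖ < 1)
    (hrec : ∀ n, φ (n + 1) * (z * (1 - conj (a n) * φ n)) = φ n - a n)
    (hΨrec : ∀ n, Ψ (n + 1) * (1 - conj (a n) * φ n) =
      Ψ n * ((Real.sqrt (1 - ‖a n‖ ^ 2) : ℝ) : ℂ))
    (j d : ℕ) :
    Ψ (j + d) = Ψ j * ((schurPQ a j d).2.eval z + (schurPQ a j d).1.eval z * (z * φ (j + d))) := by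
  induction d with
  | zero => simp [schurPQ]
  | succ d ih =>
    have hr := ofReal_sqrt_one_sub_norm_sq_ne_zero (ha (j + d))
    have hr2 := ofReal_sqrt_one_sub_norm_sq_sq (ha (j + d)).le
    have hmob := schur_step_mobius (p := (schurPQ a j d).1.eval z) (q := (schurPQ a j d).2.eval z)
      (hrec (j + d))
    rw [← add_assoc]
    apply mul_right_cancel₀ (one_sub_conj_mul_ne_zero (ha (j + d)) (hrec (j + d)))
    rw [hΨrec, ih, schurPQ.succ]
    simp only [eval_smul, eval_add, eval_mul, eval_C, eval_X, smul_eq_mul]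
    rw [← hr2] at hmob
    field_simp
    linear_combination -(Ψ j) * hmob

lemma analyticAt_schurE {a : ℕ → ℂ} (ha : ∀ k, ‖a k‖ < 1) (j m : ℕ) :
    AnalyticAt ℂ (schurE a j m) 0 :=
  ((schurPQ a j m).1.differentiable.analyticAt 0).div
    ((schurPQ a j m).2.differentiable.analyticAt 0) (schurPQ.snd_eval_zero_ne_zero ha j m)

lemma mul_div_one_add_div_mul_mul_inv {ψ Q P Q₀ P₀ R w x : ℂ} (hψ : ψ ≠ 0) (hQ₀ : Q₀ ≠ 0)
    (hden : Q₀ + P₀ * w ≠ 0) (hdet : P₀ * Q - P * Q₀ = x * R) :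
    ψ * (Q + P * w) / (1 + P₀ / Q₀ * w) * ψ⁻¹ = Q - x * w * R / (Q₀ + P₀ * w) := by
  have hden' : Q₀ + w * P₀ ≠ 0 := by rwa [mul_comm]
  field_simp
  linear_combination -w * hdet

lemma exists_analyticAt_eventuallyEq_schurPQ_snd_sub_pow_mul {f ψ : ℕ → ℂ → ℂ}
    (ha : ∀ n, ‖f n 0‖ < 1)
    (hrec : ∀ n, ∀ z ∈ Metric.ball (0 : ℂ) 1,
      f (n + 1) z * (z * (1 - conj (f n 0) * f n z)) = f n z - f n 0)
    (hψrec : ∀ n, ∀ z ∈ Metric.ball (0 : ℂ) 1,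
      ψ (n + 1) z * (1 - conj (f n 0) * f n z) =
        ψ n z * ((Real.sqrt (1 - ‖f n 0‖ ^ 2) : ℝ) : ℂ))
    {j d : ℕ} (hf : AnalyticAt ℂ (f (j + d)) 0) (hψ : ContinuousAt (ψ j) 0) (hψ0 : ψ j 0 ≠ 0) :
    ∃ h : ℂ → ℂ, AnalyticAt ℂ h 0 ∧
      (fun z => ψ (j + d) z / (1 + schurE (fun i => f i 0) 0 (j + d) z * (z * f (j + d) z)) *
          (ψ j z)⁻¹) =ᶠ[𝓝 0]
        fun z => (schurPQ (fun i => f i 0) j d).2.eval z - z ^ (d + 1) * h z := by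
  set a : ℕ → ℂ := fun i => f i 0
  have ha' : ∀ k, ‖a k‖ < 1 := ha
  set P₀ := (schurPQ a 0 (j + d)).1
  set Q₀ := (schurPQ a 0 (j + d)).2
  have hQ₀ : Q₀.eval 0 ≠ 0 := schurPQ.snd_eval_zero_ne_zero ha' 0 (j + d)
  have hden : AnalyticAt ℂ (fun z => Q₀.eval z + P₀.eval z * (z * f (j + d) z)) 0 :=
    (Q₀.differentiable.analyticAt 0).add
      ((P₀.differentiable.analyticAt 0).mul (analyticAt_id.mul hf))
  refine ⟨fun z => f (j + d) z * (schurPQ a 0 j).1.eval z /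
      (Q₀.eval z + P₀.eval z * (z * f (j + d) z)),
    (hf.mul ((schurPQ a 0 j).1.differentiable.analyticAt 0)).div hden (by simpa using hQ₀), ?_⟩
  filter_upwards [Metric.ball_mem_nhds (0 : ℂ) one_pos, hψ.eventually_ne hψ0,
    hden.continuousAt.eventually_ne (by simpa using hQ₀),
    Q₀.continuous.continuousAt.eventually_ne hQ₀] with z hz hψz hdenz hQ₀z
  have hdet := congrArg (eval z) (schurPQ.det ha' 0 j d)
  simp only [zero_add, eval_sub, eval_mul, eval_pow, eval_X] at hdet
  have htransfer := eq_mul_eval_schurPQ (φ := fun n => f n z) (Ψ := fun n => ψ n z) ha'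
    (fun n => hrec n z hz) (fun n => hψrec n z hz) j d
  rw [htransfer, schurE, mul_div_one_add_div_mul_mul_inv hψz hQ₀z hdenz hdet]
  ring

theorem stmt16_general (f ψ : ℕ → ℂ → ℂ)
    (hfa : ∀ n, DifferentiableOn ℂ (f n) (Metric.ball 0 1))
    (ha : ∀ n, ‖f n 0‖ < 1)
    (hrec : ∀ n, ∀ z ∈ Metric.ball (0 : ℂ) 1,
      f (n + 1) z * (z * (1 - conj (f n 0) * f n z)) = f n z - f n 0)
    (hψa : ∀ n, DifferentiableOn ℂ (ψ n) (Metric.ball 0 1))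
    (hψ0 : ∀ n, (ψ n 0).im = 0 ∧ 0 < (ψ n 0).re)
    (hψrec : ∀ n, ∀ z ∈ Metric.ball (0 : ℂ) 1,
      ψ (n + 1) z * (1 - conj (f n 0) * f n z) =
        ψ n z * ((Real.sqrt (1 - ‖f n 0‖ ^ 2) : ℝ) : ℂ))
    (L : ℕ → ℕ → ℂ)
    (hL : ∀ n m : ℕ, m ≤ n → L n m =
      taylorCoeff (fun z => ψ n z /
        (1 + schurE (fun i => f i 0) 0 n z * (z * f n z))) (n - m)) :
    (∀ n, L n n = ψ n 0) ∧
    ∀ j n : ℕ, j ≤ n →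
      ∑ m ∈ Finset.Icc j n, L n m * taylorCoeff (fun z => (ψ j z)⁻¹) (m - j) =
        if n = j then 1 else 0 := by
  have hball : Metric.ball (0 : ℂ) 1 ∈ 𝓝 0 := Metric.ball_mem_nhds 0 one_pos
  refine ⟨fun n => by simp [hL n n le_rfl, taylorCoeff_zero], fun j n hjn => ?_⟩
  obtain ⟨d, rfl⟩ := Nat.exists_eq_add_of_le hjn
  have hψj : ψ j 0 ≠ 0 := fun h => by simpa [h] using (hψ0 j).2
  have hf := (hfa (j + d)).analyticAt hball
  have hLA : AnalyticAt ℂ (fun z => ψ (j + d) z /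
      (1 + schurE (fun i => f i 0) 0 (j + d) z * (z * f (j + d) z))) 0 :=
    ((hψa _).analyticAt hball).div
      (analyticAt_const.add ((analyticAt_schurE ha 0 _).mul (analyticAt_id.mul hf))) (by simp)
  have hψjA := (hψa j).analyticAt hball
  obtain ⟨h, hh, heq⟩ :=
    exists_analyticAt_eventuallyEq_schurPQ_snd_sub_pow_mul ha hrec hψrec hf hψjA.continuousAt hψj
  rw [Finset.sum_congr rfl fun m hm => by rw [hL _ _ (Finset.mem_Icc.1 hm).2],
    sum_Icc_taylorCoeff_mul_taylorCoeff hLA (hψjA.fun_inv hψj),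
    taylorCoeff_eq_coeff_of_eventuallyEq hh heq, schurPQ.snd_coeff_self]
  simp

theorem stmt16 (f ψ : ℕ → ℂ → ℂ)
    (hfa : ∀ n, DifferentiableOn ℂ (f n) (Metric.ball 0 1))
    (hfb : ∀ n, ∀ z ∈ Metric.ball (0 : ℂ) 1, ‖f n z‖ ≤ 1)
    (ha : ∀ n, ‖f n 0‖ < 1)
    (hrec : ∀ n, ∀ z ∈ Metric.ball (0 : ℂ) 1,
      f (n + 1) z * (z * (1 - conj (f n 0) * f n z)) = f n z - f n 0)
    (hψa : ∀ n, DifferentiableOn ℂ (ψ n) (Metric.ball 0 1))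
    (hψ0 : ∀ n, (ψ n 0).im = 0 ∧ 0 < (ψ n 0).re)
    (hψrec : ∀ n, ∀ z ∈ Metric.ball (0 : ℂ) 1,
      ψ (n + 1) z * (1 - conj (f n 0) * f n z) =
        ψ n z * ((Real.sqrt (1 - ‖f n 0‖ ^ 2) : ℝ) : ℂ))
    (L : ℕ → ℕ → ℂ)
    (hL : ∀ n m : ℕ, m ≤ n → L n m =
      taylorCoeff (fun z => ψ n z /
        (1 + schurE (fun i => f i 0) 0 n z * (z * f n z))) (n - m))
    (hL0 : ∀ n m : ℕ, n < m → L n m = 0) :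
    (∀ n, L n n = ψ n 0) ∧
    ∀ j n : ℕ, j ≤ n →
      ∑ m ∈ Finset.Icc j n, L n m * taylorCoeff (fun z => (ψ j z)⁻¹) (m - j) =
        if n = j then 1 else 0 :=
  stmt16_general f ψ hfa ha hrec hψa hψ0 hψrec L hL
end
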